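/- arXiv:1712.00723 — 2 statements merged into one kernel-verified Lean document; each statement's English description precedes it below -/
import Mathlib

section
/- (Unisolvence of the quadrilateral Wilson element.) With the quadrilateral setup below and assuming Q is convex, i.e. |α| + |β| < 1, the following holds: for every (v₁, v₂, v₃, v₄, c₅, c₆) ∈ ℝ⁶ there exists a unique polynomial function p : ℝ² → ℝ of total degree at most 2 such that p(aᵢ) = vᵢ for i = 1, 2, 3, 4, and ∫_Q D²p(x)(r, r) dx = c₅ and ∫_Q D²p(x)(s, s) dx = c₆, where Q denotes the convex hull of {a₁, a₂, a₃, a₄}, the integrals are with respect to two-dimensional Lebesgue measure, and D²p(x)(u, u) denotes the second directional derivative of p at x along the vector u (which, for p of degree at most 2, is a constant function of x; D²p(·)(r,r) and D²p(·)(s,s) are the second derivatives ∂_ξξ p and ∂_ηη p in the (ξ,η)-coordinates). -/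
/-!
In the coordinates `(ξ, η)` every quadratic is `A ξ² + B ξη + C η² + D ξ + E η + F`, and its second
derivatives along `r` and `s` are the constants `2A` and `2C`; as `Q` has positive area, the two
integral conditions fix `A` and `C`. The vertex conditions then form a `4 × 4` system for
`B, D, E, F` whose determinant is a multiple of `1 - α² - β²`, which convexity keeps away from `0`.
So the degrees of freedom are injective on the six-dimensional coefficient space, hence bijective.
-/

open MeasureTheory

def quadPoly (c : Fin 6 → ℝ) (x : ℝ × ℝ) : ℝ :=
  c 0 * x.1 ^ 2 + c 1 * x.1 * x.2 + c 2 * x.2 ^ 2 + c 3 * x.1 + c 4 * x.2 + c 5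

def quadPart (c : Fin 6 → ℝ) (u : ℝ × ℝ) : ℝ :=
  c 0 * u.1 ^ 2 + c 1 * u.1 * u.2 + c 2 * u.2 ^ 2

theorem eq_zero_of_quadPoly_eq_zero {c : Fin 6 → ℝ} (h : quadPoly c = 0) : c = 0 := by
  have e (x : ℝ × ℝ) : quadPoly c x = 0 := congrFun h x
  have e₀ := e (0, 0); have e₁ := e (1, 0); have e₂ := e (-1, 0)
  have e₃ := e (0, 1); have e₄ := e (0, -1); have e₅ := e (1, 1)
  simp only [quadPoly] at e₀ e₁ e₂ e₃ e₄ e₅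
  ext i; fin_cases i <;> simp <;> linarith

open ContinuousLinearMap in
theorem iteratedFDeriv_two_quadPoly (c : Fin 6 → ℝ) (x u : ℝ × ℝ) :
    iteratedFDeriv ℝ 2 (quadPoly c) x ![u, u] = 2 * quadPart c u := by
  let hess : ℝ × ℝ →L[ℝ] ℝ × ℝ →L[ℝ] ℝ :=
    ((2 * c 0) • fst ℝ ℝ ℝ + c 1 • snd ℝ ℝ ℝ).smulRight (fst ℝ ℝ ℝ)
      + (c 1 • fst ℝ ℝ ℝ + (2 * c 2) • snd ℝ ℝ ℝ).smulRight (snd ℝ ℝ ℝ)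
  let grad₀ : ℝ × ℝ →L[ℝ] ℝ := c 3 • fst ℝ ℝ ℝ + c 4 • snd ℝ ℝ ℝ
  have hgrad (y : ℝ × ℝ) : HasFDerivAt (quadPoly c) (hess y + grad₀) y := by
    have h₁ : HasFDerivAt Prod.fst (fst ℝ ℝ ℝ) y := hasFDerivAt_fst
    have h₂ : HasFDerivAt Prod.snd (snd ℝ ℝ ℝ) y := hasFDerivAt_snd
    have H := (((((h₁.pow 2).const_mul (c 0)).add ((h₁.mul h₂).const_mul (c 1))).add
      ((h₂.pow 2).const_mul (c 2))).add
      ((h₁.const_mul (c 3)).add (h₂.const_mul (c 4)))).add_const (c 5)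
    rw [show quadPoly c = fun y => c 0 * y.1 ^ 2 + c 1 * (y.1 * y.2) + c 2 * y.2 ^ 2
      + (c 3 * y.1 + c 4 * y.2) + c 5 from funext fun y => by simp only [quadPoly]; ring]
    exact H.congr_fderiv (by ext <;> simp [hess, grad₀] <;> ring)
  have hfderiv : fderiv ℝ (quadPoly c) = fun y => hess y + grad₀ :=
    funext fun y => (hgrad y).fderiv
  rw [iteratedFDeriv_two_apply, hfderiv, (hess.hasFDerivAt.add_const grad₀).fderiv]
  simp [hess, quadPart]
  ring

theorem setIntegral_iteratedFDeriv_two_quadPoly (μ : Measure (ℝ × ℝ)) (S : Set (ℝ × ℝ))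
    (c : Fin 6 → ℝ) (u : ℝ × ℝ) :
    ∫ x in S, iteratedFDeriv ℝ 2 (quadPoly c) x ![u, u] ∂μ = μ.real S * (2 * quadPart c u) := by
  simp_rw [iteratedFDeriv_two_quadPoly, setIntegral_const, smul_eq_mul]

theorem exists_quadPoly_add_smul_add_smul (c : Fin 6 → ℝ) (O r s : ℝ × ℝ) :
    ∃ B D E F : ℝ, ∀ ξ η : ℝ, quadPoly c (O + ξ • r + η • s) =
      quadPart c r * ξ ^ 2 + B * (ξ * η) + quadPart c s * η ^ 2 + D * ξ + E * η + F :=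
  ⟨2 * c 0 * r.1 * s.1 + c 1 * (r.1 * s.2 + r.2 * s.1) + 2 * c 2 * r.2 * s.2,
    2 * c 0 * O.1 * r.1 + c 1 * (O.1 * r.2 + O.2 * r.1) + 2 * c 2 * O.2 * r.2
      + c 3 * r.1 + c 4 * r.2,
    2 * c 0 * O.1 * s.1 + c 1 * (O.1 * s.2 + O.2 * s.1) + 2 * c 2 * O.2 * s.2
      + c 3 * s.1 + c 4 * s.2,
    quadPoly c O, fun ξ η => by simp only [quadPoly, quadPart, Prod.fst_add, Prod.snd_add,
      Prod.smul_fst, Prod.smul_snd, smul_eq_mul]; ring⟩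

theorem bilinear_eq_zero_of_vanishes_at_vertices {α β B D E F : ℝ} (hαβ : α ^ 2 + β ^ 2 ≠ 1)
    (h₁ : B * ((-1 - α) * (1 - β)) + D * (-1 - α) + E * (1 - β) + F = 0)
    (h₂ : B * ((α - 1) * (β - 1)) + D * (α - 1) + E * (β - 1) + F = 0)
    (h₃ : B * ((1 - α) * (-1 - β)) + D * (1 - α) + E * (-1 - β) + F = 0)
    (h₄ : B * ((1 + α) * (1 + β)) + D * (1 + α) + E * (1 + β) + F = 0) :
    B = 0 ∧ D = 0 ∧ E = 0 ∧ F = 0 := by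
  have hB : B = 0 := by
    have : B * (1 - α ^ 2 - β ^ 2) = 0 := by
      linear_combination (1 / 4) * (h₄ - h₁ + h₂ - h₃)
        - (α / 4) * (h₃ + h₄ - h₁ - h₂) - (β / 4) * (h₄ + h₁ - h₂ - h₃)
    exact (mul_eq_zero.mp this).resolve_right fun h => hαβ (by linarith)
  refine ⟨hB, ?_, ?_, ?_⟩
  · linear_combination (1 / 4) * (h₃ + h₄ - h₁ - h₂) - α * hB
  · linear_combination (1 / 4) * (h₄ + h₁ - h₂ - h₃) - β * hB
  · linear_combination (1 / 4) * (h₁ + h₂ + h₃ + h₄) - α * β * hB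

theorem quadrilateral_vertices_eq {V : Type*} [AddCommGroup V] [Module ℝ V]
    {a₁ a₂ a₃ a₄ O r s : V} {α β : ℝ}
    (hO : O = (1/4 : ℝ) • (a₁ + a₂ + a₃ + a₄))
    (hr : r = (1/4 : ℝ) • (a₃ + a₄ - a₁ - a₂))
    (hs : s = (1/4 : ℝ) • (a₄ + a₁ - a₂ - a₃))
    (ha₄ : a₄ = O + (1 + α) • r + (1 + β) • s) :
    a₁ = O + (-1 - α) • r + (1 - β) • s ∧ a₂ = O + (α - 1) • r + (β - 1) • s ∧
      a₃ = O + (1 - α) • r + (-1 - β) • s := by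
  refine ⟨?_, ?_, ?_⟩
  · linear_combination (norm := module) -ha₄ - (2 : ℝ) • hO - (2 : ℝ) • hs
  · linear_combination (norm := module) ha₄ + (2 : ℝ) • hr + (2 : ℝ) • hs
  · linear_combination (norm := module) -ha₄ - (2 : ℝ) • hO - (2 : ℝ) • hr

theorem affineSpan_quadrilateral_eq_top {V : Type*} [AddCommGroup V] [Module ℝ V]
    {a₁ a₂ a₃ a₄ r s : V} (hr : r = (1/4 : ℝ) • (a₃ + a₄ - a₁ - a₂))
    (hs : s = (1/4 : ℝ) • (a₄ + a₁ - a₂ - a₃)) (hspan : Submodule.span ℝ {r, s} = ⊤) :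
    affineSpan ℝ {a₁, a₂, a₃, a₄} = ⊤ := by
  rw [AffineSubspace.affineSpan_eq_top_iff_vectorSpan_eq_top_of_nonempty ℝ V V
    (Set.insert_nonempty _ _), eq_top_iff, ← hspan, Submodule.span_le]
  have hmem {x y : V} (hx : x ∈ ({a₁, a₂, a₃, a₄} : Set V))
      (hy : y ∈ ({a₁, a₂, a₃, a₄} : Set V)) :
      x - y ∈ vectorSpan ℝ {a₁, a₂, a₃, a₄} := vsub_mem_vectorSpan ℝ hx hy
  rintro _ (rfl | rfl)
  · rw [hr, show a₃ + a₄ - a₁ - a₂ = (a₃ - a₂) + (a₄ - a₁) by abel]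
    exact Submodule.smul_mem _ _ (add_mem (hmem (by simp) (by simp)) (hmem (by simp) (by simp)))
  · rw [hs, show a₄ + a₁ - a₂ - a₃ = (a₄ - a₃) + (a₁ - a₂) by abel]
    exact Submodule.smul_mem _ _ (add_mem (hmem (by simp) (by simp)) (hmem (by simp) (by simp)))

theorem measureReal_convexHull_pos {E : Type*} [NormedAddCommGroup E] [NormedSpace ℝ E]
    [MeasurableSpace E] [BorelSpace E] [FiniteDimensional ℝ E] (μ : Measure E)
    [μ.IsAddHaarMeasure] {S : Set E} (hfin : S.Finite) (hS : affineSpan ℝ S = ⊤) :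
    0 < μ.real (convexHull ℝ S) := by
  refine ENNReal.toReal_pos (Measure.measure_pos_of_nonempty_interior μ ?_).ne'
    (hfin.isCompact_convexHull ℝ).measure_lt_top.ne
  rwa [(convex_convexHull ℝ S).interior_nonempty_iff_affineSpan_eq_top, affineSpan_convexHull]

-- The two integral degrees of freedom enter divided by `2 * area Q`.
def wilsonDofs (a₁ a₂ a₃ a₄ r s : ℝ × ℝ) : (Fin 6 → ℝ) →ₗ[ℝ] Fin 6 → ℝ where
  toFun c := ![quadPoly c a₁, quadPoly c a₂, quadPoly c a₃, quadPoly c a₄,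
    quadPart c r, quadPart c s]
  map_add' c d := by ext i; fin_cases i <;> simp [quadPoly, quadPart] <;> ring
  map_smul' t c := by ext i; fin_cases i <;> simp [quadPoly, quadPart] <;> ring

@[simp]
theorem wilsonDofs_apply (a₁ a₂ a₃ a₄ r s : ℝ × ℝ) (c : Fin 6 → ℝ) :
    wilsonDofs a₁ a₂ a₃ a₄ r s c = ![quadPoly c a₁, quadPoly c a₂, quadPoly c a₃, quadPoly c a₄,
      quadPart c r, quadPart c s] := rfl

theorem wilsonDofs_injective {a₁ a₂ a₃ a₄ O r s : ℝ × ℝ} {α β : ℝ}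
    (h₁ : a₁ = O + (-1 - α) • r + (1 - β) • s) (h₂ : a₂ = O + (α - 1) • r + (β - 1) • s)
    (h₃ : a₃ = O + (1 - α) • r + (-1 - β) • s) (h₄ : a₄ = O + (1 + α) • r + (1 + β) • s)
    (hspan : Submodule.span ℝ {r, s} = ⊤) (hαβ : α ^ 2 + β ^ 2 ≠ 1) :
    Function.Injective (wilsonDofs a₁ a₂ a₃ a₄ r s) := by
  rw [← LinearMap.ker_eq_bot, LinearMap.ker_eq_bot']
  intro c hc
  simp only [wilsonDofs_apply, Matrix.cons_eq_zero_iff, Matrix.zero_empty, and_true] at hc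
  obtain ⟨hv₁, hv₂, hv₃, hv₄, hr, hs⟩ := hc
  obtain ⟨B, D, E, F, hpar⟩ := exists_quadPoly_add_smul_add_smul c O r s
  simp only [hr, hs, zero_mul, add_zero, zero_add] at hpar
  obtain ⟨rfl, rfl, rfl, rfl⟩ := bilinear_eq_zero_of_vanishes_at_vertices hαβ
    (hpar _ _ ▸ h₁ ▸ hv₁) (hpar _ _ ▸ h₂ ▸ hv₂) (hpar _ _ ▸ h₃ ▸ hv₃) (hpar _ _ ▸ h₄ ▸ hv₄)
  refine eq_zero_of_quadPoly_eq_zero (funext fun x => ?_)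
  obtain ⟨ξ, η, hx⟩ := Submodule.mem_span_pair.mp (hspan ▸ Submodule.mem_top (x := x - O))
  rw [show x = O + ξ • r + η • s by rw [add_assoc, hx]; abel]
  simp [hpar]

/-- Unisolvence of the quadrilateral Wilson element: on a convex quadrilateral
(|α| + |β| < 1), a quadratic polynomial is uniquely determined by its values at the
four vertices together with the integrals over Q of its second derivatives along the
directions r and s. -/
theorem quadrilateral_wilson_unisolvence
    (a₁ a₂ a₃ a₄ O r s : ℝ × ℝ) (α β : ℝ)
    (hO : O = (1/4 : ℝ) • (a₁ + a₂ + a₃ + a₄))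
    (hr : r = (1/4 : ℝ) • (a₃ + a₄ - a₁ - a₂))
    (hs : s = (1/4 : ℝ) • (a₄ + a₁ - a₂ - a₃))
    (hind : LinearIndependent ℝ ![r, s])
    (ha₄ : a₄ = O + (1 + α) • r + (1 + β) • s)
    (hconv : |α| + |β| < 1) :
    ∀ v₁ v₂ v₃ v₄ c₅ c₆ : ℝ,
      ∃! p : ℝ × ℝ → ℝ,
        (∃ c20 c11 c02 c10 c01 c00 : ℝ,
          p = fun x => c20 * x.1 ^ 2 + c11 * x.1 * x.2 + c02 * x.2 ^ 2
            + c10 * x.1 + c01 * x.2 + c00) ∧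
        p a₁ = v₁ ∧ p a₂ = v₂ ∧ p a₃ = v₃ ∧ p a₄ = v₄ ∧
        (∫ x in convexHull ℝ {a₁, a₂, a₃, a₄}, iteratedFDeriv ℝ 2 p x ![r, r]) = c₅ ∧
        (∫ x in convexHull ℝ {a₁, a₂, a₃, a₄}, iteratedFDeriv ℝ 2 p x ![s, s]) = c₆ := by
  intro v₁ v₂ v₃ v₄ c₅ c₆
  have hspan : Submodule.span ℝ {r, s} = ⊤ := by
    rw [← Matrix.range_cons_cons_empty r s ![]]
    exact hind.span_eq_top_of_card_eq_finrank' (by simp)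
  obtain ⟨h₁, h₂, h₃⟩ := quadrilateral_vertices_eq hO hr hs ha₄
  have hαβ : α ^ 2 + β ^ 2 ≠ 1 := by
    refine ne_of_lt ?_
    nlinarith [sq_abs α, sq_abs β, abs_nonneg α, abs_nonneg β]
  have hinj := wilsonDofs_injective h₁ h₂ h₃ ha₄ hspan hαβ
  set Q := convexHull ℝ {a₁, a₂, a₃, a₄}
  have hQ : 0 < volume.real Q := measureReal_convexHull_pos volume (Set.toFinite _)
    (affineSpan_quadrilateral_eq_top hr hs hspan)
  have hdofs (c : Fin 6 → ℝ) : (quadPoly c a₁ = v₁ ∧ quadPoly c a₂ = v₂ ∧ quadPoly c a₃ = v₃ ∧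
      quadPoly c a₄ = v₄ ∧ (∫ x in Q, iteratedFDeriv ℝ 2 (quadPoly c) x ![r, r]) = c₅ ∧
      (∫ x in Q, iteratedFDeriv ℝ 2 (quadPoly c) x ![s, s]) = c₆) ↔
      wilsonDofs a₁ a₂ a₃ a₄ r s c = ![v₁, v₂, v₃, v₄, c₅ / (2 * volume.real Q),
        c₆ / (2 * volume.real Q)] := by
    have hscale (x d : ℝ) : volume.real Q * (2 * x) = d ↔ x = d / (2 * volume.real Q) := by
      rw [eq_div_iff (by positivity)]; ring_nf
    simp only [setIntegral_iteratedFDeriv_two_quadPoly, hscale, wilsonDofs_apply,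
      Matrix.vecCons_inj, and_true]
  obtain ⟨c, hc⟩ := LinearMap.injective_iff_surjective.mp hinj
    ![v₁, v₂, v₃, v₄, c₅ / (2 * volume.real Q), c₆ / (2 * volume.real Q)]
  refine ⟨quadPoly c, ⟨⟨c 0, c 1, c 2, c 3, c 4, c 5, rfl⟩, (hdofs c).2 hc⟩, ?_⟩
  rintro _ ⟨⟨c20, c11, c02, c10, c01, c00, rfl⟩, hq⟩
  exact congrArg quadPoly (hinj (((hdofs ![c20, c11, c02, c10, c01, c00]).1 hq).trans hc.symm))
end

section
/- (Compatibility conditions for the vertex-value/edge-flux interpolation of quadratics on a rectangle.) Let L, H > 0 and let K = [0,L] × [0,H] be a rectangle with vertices a₁ = (0,H), a₂ = (0,0), a₃ = (L,0), a₄ = (L,H) and edges Γ₁ = {0}×[0,H], Γ₂ = [0,L]×{0}, Γ₃ = {L}×[0,H], Γ₄ = [0,L]×{H}. Given real numbers α₁, α₂, α₃, α₄ and β₁, β₂, β₃, β₄, there exists a unique polynomial function p : ℝ² → ℝ of total degree at most 2 such that p(aᵢ) = αᵢ for i = 1,…,4, ⨍_{Γ₁} ∂p/∂x = β₁, ⨍_{Γ₂}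 ∂p/∂y = β₂, ⨍_{Γ₃} ∂p/∂x = β₃ and ⨍_{Γ₄} ∂p/∂y = β₄, if and only if the two compatibility conditions (α₄ − α₁)/L + (α₃ − α₂)/L = β₁ + β₃ and (α₄ − α₃)/H + (α₁ − α₂)/H = β₂ + β₄ hold. -/
/-!
The partial derivatives of a quadratic are affine, and the average of an affine function over
a segment is its value at the midpoint, so the eight interpolation conditions are linear
equations in the six coefficients. They are triangular: the vertex values give `c₀₀` and the
mixed coefficient `c₁₁ L H = α₄ - α₃ - α₁ + α₂`, the fluxes through `Γ₁` and `Γ₂` then give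
`c₁₀` and `c₀₁`, and `α₃`, `α₁` give `c₂₀` and `c₀₂`. The two remaining equations (fluxes through
`Γ₃` and `Γ₄`) are then equivalent to the compatibility conditions.
-/

/-- The average of a function over the segment from `p` to `q`. -/
noncomputable def edgeAvg (p q : ℝ × ℝ) (v : ℝ × ℝ → ℝ) : ℝ :=
  ∫ t in (0:ℝ)..1, v ((1 - t) • p + t • q)

def quad (c20 c11 c02 c10 c01 c00 : ℝ) (z : ℝ × ℝ) : ℝ :=
  c20 * z.1 ^ 2 + c11 * z.1 * z.2 + c02 * z.2 ^ 2 + c10 * z.1 + c01 * z.2 + c00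

section

variable (c20 c11 c02 c10 c01 c00 : ℝ)

theorem hasFDerivAt_quad (z : ℝ × ℝ) :
    HasFDerivAt (quad c20 c11 c02 c10 c01 c00)
      ((2 * c20 * z.1 + c11 * z.2 + c10) • ContinuousLinearMap.fst ℝ ℝ ℝ
        + (c11 * z.1 + 2 * c02 * z.2 + c01) • ContinuousLinearMap.snd ℝ ℝ ℝ) z := by
  have hx : HasFDerivAt (fun z : ℝ × ℝ => z.1) (ContinuousLinearMap.fst ℝ ℝ ℝ) z := hasFDerivAt_fst
  have hy : HasFDerivAt (fun z : ℝ × ℝ => z.2) (ContinuousLinearMap.snd ℝ ℝ ℝ) z := hasFDerivAt_snd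
  have h := ((((((hx.pow 2).const_mul c20).add ((hx.const_mul c11).mul hy)).add
    ((hy.pow 2).const_mul c02)).add (hx.const_mul c10)).add (hy.const_mul c01)).add_const c00
  refine h.congr_fderiv (ContinuousLinearMap.ext fun v => ?_)
  simp only [Nat.add_one_sub_one, pow_one, nsmul_eq_mul, Nat.cast_ofNat, add_apply, smul_apply,
    ContinuousLinearMap.coe_fst', smul_eq_mul, ContinuousLinearMap.coe_snd']
  ring

theorem fderiv_quad_apply (z v : ℝ × ℝ) :
    fderiv ℝ (quad c20 c11 c02 c10 c01 c00) z v =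
      (2 * c20 * z.1 + c11 * z.2 + c10) * v.1 + (c11 * z.1 + 2 * c02 * z.2 + c01) * v.2 := by
  simp [(hasFDerivAt_quad c20 c11 c02 c10 c01 c00 z).fderiv]

end

theorem integral_zero_one_mul_add (a b : ℝ) : ∫ t in (0:ℝ)..1, (a * t + b) = a / 2 + b := by
  rw [intervalIntegral.integral_add ((continuous_const_mul a).intervalIntegrable 0 1)
    intervalIntegrable_const, intervalIntegral.integral_const_mul, integral_id,
    intervalIntegral.integral_const]
  norm_num [mul_one_div]

theorem edgeAvg_affine (a b c : ℝ) (p q : ℝ × ℝ) :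
    edgeAvg p q (fun z => a * z.1 + b * z.2 + c) =
      a * (midpoint ℝ p q).1 + b * (midpoint ℝ p q).2 + c := by
  have h : ∀ t : ℝ, a * ((1 - t) • p + t • q).1 + b * ((1 - t) • p + t • q).2 + c
      = (a * (q.1 - p.1) + b * (q.2 - p.2)) * t + (a * p.1 + b * p.2 + c) := by
    intro t
    simp only [Prod.fst_add, Prod.smul_fst, smul_eq_mul, Prod.snd_add, Prod.smul_snd]
    ring
  simp only [edgeAvg, h, integral_zero_one_mul_add]
  simp only [midpoint_eq_smul_add, invOf_eq_inv, smul_add, Prod.fst_add, Prod.smul_fst,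
    smul_eq_mul, Prod.snd_add, Prod.smul_snd]
  ring

theorem edgeAvg_fderiv_quad (c20 c11 c02 c10 c01 c00 : ℝ) (p q v : ℝ × ℝ) :
    edgeAvg p q (fun z => fderiv ℝ (quad c20 c11 c02 c10 c01 c00) z v) =
      fderiv ℝ (quad c20 c11 c02 c10 c01 c00) (midpoint ℝ p q) v := by
  have h : (fun z => fderiv ℝ (quad c20 c11 c02 c10 c01 c00) z v) = fun z =>
      (2 * c20 * v.1 + c11 * v.2) * z.1 + (c11 * v.1 + 2 * c02 * v.2) * z.2
        + (c10 * v.1 + c01 * v.2) := by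
    ext z
    rw [fderiv_quad_apply]
    ring
  rw [h, edgeAvg_affine, fderiv_quad_apply]
  ring

def IsRectInterpolant (L H α₁ α₂ α₃ α₄ β₁ β₂ β₃ β₄ : ℝ) (p : ℝ × ℝ → ℝ) : Prop :=
  p (0, H) = α₁ ∧ p (0, 0) = α₂ ∧ p (L, 0) = α₃ ∧ p (L, H) = α₄ ∧
    edgeAvg (0, 0) (0, H) (fun z => fderiv ℝ p z (1, 0)) = β₁ ∧
    edgeAvg (0, 0) (L, 0) (fun z => fderiv ℝ p z (0, 1)) = β₂ ∧
    edgeAvg (L, 0) (L, H) (fun z => fderiv ℝ p z (1, 0)) = β₃ ∧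
    edgeAvg (0, H) (L, H) (fun z => fderiv ℝ p z (0, 1)) = β₄

section

variable {L H α₁ α₂ α₃ α₄ β₁ β₂ β₃ β₄ : ℝ}

theorem isRectInterpolant_quad_iff {c20 c11 c02 c10 c01 c00 : ℝ} :
    IsRectInterpolant L H α₁ α₂ α₃ α₄ β₁ β₂ β₃ β₄ (quad c20 c11 c02 c10 c01 c00) ↔
      c02 * H ^ 2 + c01 * H + c00 = α₁ ∧ c00 = α₂ ∧ c20 * L ^ 2 + c10 * L + c00 = α₃ ∧
      c20 * L ^ 2 + c11 * L * H + c02 * H ^ 2 + c10 * L + c01 * H + c00 = α₄ ∧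
      c11 * H / 2 + c10 = β₁ ∧ c11 * L / 2 + c01 = β₂ ∧
      2 * c20 * L + c11 * H / 2 + c10 = β₃ ∧ c11 * L / 2 + 2 * c02 * H + c01 = β₄ := by
  simp only [IsRectInterpolant, edgeAvg_fderiv_quad]
  simp only [fderiv_quad_apply, midpoint_eq_smul_add, quad, Prod.smul_mk, Prod.mk_add_mk,
    smul_eq_mul, invOf_eq_inv]
  repeat' apply and_congr
  all_goals ring_nf

theorem rect_compatible_of_isRectInterpolant_quad (hL : L ≠ 0) (hH : H ≠ 0)
    {c20 c11 c02 c10 c01 c00 : ℝ}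
    (h : IsRectInterpolant L H α₁ α₂ α₃ α₄ β₁ β₂ β₃ β₄ (quad c20 c11 c02 c10 c01 c00)) :
    (α₄ - α₁) / L + (α₃ - α₂) / L = β₁ + β₃ ∧ (α₄ - α₃) / H + (α₁ - α₂) / H = β₂ + β₄ := by
  obtain ⟨e₁, e₂, e₃, e₄, g₁, g₂, g₃, g₄⟩ := isRectInterpolant_quad_iff.1 h
  constructor
  · field_simp
    linear_combination e₁ - e₄ + e₂ - e₃ + L * g₁ + L * g₃
  · field_simp
    linear_combination e₃ - e₄ + e₂ - e₁ + H * g₂ + H * g₄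

noncomputable def rectInterpolant (L H α₁ α₂ α₃ α₄ β₁ β₂ : ℝ) : ℝ × ℝ → ℝ :=
  let c11 := (α₄ - α₃ - α₁ + α₂) / (L * H)
  let c10 := β₁ - c11 * H / 2
  let c01 := β₂ - c11 * L / 2
  quad ((α₃ - α₂ - c10 * L) / L ^ 2) c11 ((α₁ - α₂ - c01 * H) / H ^ 2) c10 c01 α₂

theorem isRectInterpolant_rectInterpolant (hL : L ≠ 0) (hH : H ≠ 0)
    (h : (α₄ - α₁) / L + (α₃ - α₂) / L = β₁ + β₃ ∧ (α₄ - α₃) / H + (α₁ - α₂) / H = β₂ + β₄) :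
    IsRectInterpolant L H α₁ α₂ α₃ α₄ β₁ β₂ β₃ β₄ (rectInterpolant L H α₁ α₂ α₃ α₄ β₁ β₂) := by
  obtain ⟨h₁, h₂⟩ := h
  field_simp at h₁ h₂
  rw [rectInterpolant, isRectInterpolant_quad_iff]
  refine ⟨?_, rfl, ?_, ?_, ?_, ?_, ?_, ?_⟩
  · field_simp
    ring
  · field_simp
    ring
  · field_simp
    ring
  · ring
  · ring
  · field_simp
    linear_combination 2 * h₁
  · field_simp
    linear_combination 2 * h₂

theorem eq_rectInterpolant_of_isRectInterpolant_quad (hL : L ≠ 0) (hH : H ≠ 0)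
    {c20 c11 c02 c10 c01 c00 : ℝ}
    (h : IsRectInterpolant L H α₁ α₂ α₃ α₄ β₁ β₂ β₃ β₄ (quad c20 c11 c02 c10 c01 c00)) :
    quad c20 c11 c02 c10 c01 c00 = rectInterpolant L H α₁ α₂ α₃ α₄ β₁ β₂ := by
  obtain ⟨e₁, rfl, e₃, e₄, g₁, g₂, -, -⟩ := isRectInterpolant_quad_iff.1 h
  have h11 : c11 = (α₄ - α₃ - α₁ + c00) / (L * H) := by
    field_simp
    linear_combination e₄ - e₃ - e₁
  have h10 : c10 = β₁ - c11 * H / 2 := by linarith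
  have h01 : c01 = β₂ - c11 * L / 2 := by linarith
  have h20 : c20 = (α₃ - c00 - c10 * L) / L ^ 2 := by
    field_simp
    linear_combination e₃
  have h02 : c02 = (α₁ - c00 - c01 * H) / H ^ 2 := by
    field_simp
    linear_combination e₁
  rw [rectInterpolant, h20, h02, h10, h01, h11]

end

/-- Compatibility conditions for the vertex-value/edge-flux interpolation of quadratics
on the rectangle [0,L] × [0,H] with vertices a₁ = (0,H), a₂ = (0,0), a₃ = (L,0),
a₄ = (L,H): there is a unique quadratic polynomial with prescribed vertex values αᵢ and
prescribed averaged edge derivatives βᵢ iff the two compatibility conditions hold. -/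
theorem rectangle_quadratic_interpolation_iff_compatible
    (L H : ℝ) (hL : 0 < L) (hH : 0 < H)
    (α₁ α₂ α₃ α₄ β₁ β₂ β₃ β₄ : ℝ) :
    (∃! p : ℝ × ℝ → ℝ,
      (∃ c20 c11 c02 c10 c01 c00 : ℝ,
        p = fun z => c20 * z.1 ^ 2 + c11 * z.1 * z.2 + c02 * z.2 ^ 2
          + c10 * z.1 + c01 * z.2 + c00) ∧
      p (0, H) = α₁ ∧ p (0, 0) = α₂ ∧ p (L, 0) = α₃ ∧ p (L, H) = α₄ ∧
      edgeAvg (0, 0) (0, H) (fun z => fderiv ℝ p z (1, 0)) = β₁ ∧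
      edgeAvg (0, 0) (L, 0) (fun z => fderiv ℝ p z (0, 1)) = β₂ ∧
      edgeAvg (L, 0) (L, H) (fun z => fderiv ℝ p z (1, 0)) = β₃ ∧
      edgeAvg (0, H) (L, H) (fun z => fderiv ℝ p z (0, 1)) = β₄) ↔
    ((α₄ - α₁) / L + (α₃ - α₂) / L = β₁ + β₃ ∧
     (α₄ - α₃) / H + (α₁ - α₂) / H = β₂ + β₄) := by
  constructor
  · rintro ⟨_, ⟨⟨c20, c11, c02, c10, c01, c00, rfl⟩, hp⟩, -⟩
    exact rect_compatible_of_isRectInterpolant_quad hL.ne' hH.ne' hp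
  · intro hc
    refine ⟨rectInterpolant L H α₁ α₂ α₃ α₄ β₁ β₂,
      ⟨⟨_, _, _, _, _, _, rfl⟩, isRectInterpolant_rectInterpolant hL.ne' hH.ne' hc⟩, ?_⟩
    rintro _ ⟨⟨c20, c11, c02, c10, c01, c00, rfl⟩, hq⟩
    exact eq_rectInterpolant_of_isRectInterpolant_quad hL.ne' hH.ne' hq
end
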